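/- Let U', g and J = J⁺_{e^{iφ}} (φ ∈ ℝ) be as in Theorem 1. Then J is not integrable: its Nijenhuis tensor N_J(X,Y) = [JX, JY] − [X,Y] − J[JX, Y] − J[X, JY] (defined on smooth vector fields X, Y on U' via the Lie bracket) does not vanish identically on U'. Consequently, for every φ ∈ [0, 2π) the almost-Kähler structure (U', g, J⁺_{e^{iφ}}) is non-Kähler. -/

import Mathlib

noncomputable section

/-- `w(z₁,z₂) = v − 2z₂z̄₂` where `v = z₁ + z̄₁ = 2 Re z₁`. -/
def wDef (p : ℂ × ℂ) : ℝ := 2 * p.1.re - 2 * Complex.normSq p.2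

/-- The region `U' = {(z₁,z₂) ∈ ℂ² : v − 2z₂z̄₂ > 0}`. -/
def Uprime : Set (ℂ × ℂ) := {p | 0 < wDef p}

/-- `K = log(v − 2z₂z̄₂)`. -/
def KDef (p : ℂ × ℂ) : ℝ := Real.log (wDef p)

/-- `K` as a function of `v` at fixed `z₂`. -/
def KofV (z₂ : ℂ) (v : ℝ) : ℝ := Real.log (v - 2 * Complex.normSq z₂)

/-- `K_v = ∂K/∂v`. -/
def Kv (p : ℂ × ℂ) : ℝ := deriv (KofV p.2) (2 * p.1.re)

/-- `K_vv = ∂²K/∂v²`. -/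
def Kvv (p : ℂ × ℂ) : ℝ := deriv (deriv (KofV p.2)) (2 * p.1.re)

/-- The Wirtinger derivative `∂G/∂z = ½(∂_x G − i ∂_y G)` of `G : ℂ → ℂ` at `c`. -/
def wirtD (G : ℂ → ℂ) (c : ℂ) : ℂ :=
  (deriv (fun x : ℝ => G ((x : ℂ) + (c.im : ℂ) * Complex.I)) c.re -
    Complex.I * deriv (fun y : ℝ => G ((c.re : ℂ) + (y : ℂ) * Complex.I)) c.im) / 2

/-- The Wirtinger derivative `∂G/∂z̄ = ½(∂_x G + i ∂_y G)` of `G : ℂ → ℂ` at `c`. -/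
def wirtDbar (G : ℂ → ℂ) (c : ℂ) : ℂ :=
  (deriv (fun x : ℝ => G ((x : ℂ) + (c.im : ℂ) * Complex.I)) c.re +
    Complex.I * deriv (fun y : ℝ => G ((c.re : ℂ) + (y : ℂ) * Complex.I)) c.im) / 2

/-- `K_{v2} = ∂²K/∂v∂z₂` (Wirtinger derivative in `z₂` of `K_v`). -/
def Kv2 (p : ℂ × ℂ) : ℂ :=
  wirtD (fun z₂ => ((deriv (KofV z₂) (2 * p.1.re) : ℝ) : ℂ)) p.2

/-- `K_{v2̄} = ∂²K/∂v∂z̄₂`. -/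
def Kv2bar (p : ℂ × ℂ) : ℂ :=
  wirtDbar (fun z₂ => ((deriv (KofV z₂) (2 * p.1.re) : ℝ) : ℂ)) p.2

/-- `K_{22̄} = ∂²K/∂z₂∂z̄₂` (at fixed `v`). -/
def K22bar (p : ℂ × ℂ) : ℂ :=
  wirtDbar (fun z₂ =>
    wirtD (fun u => ((Real.log (2 * p.1.re - 2 * Complex.normSq u) : ℝ) : ℂ)) z₂) p.2

/-- The 1-form `dz₁ − 2z̄₂dz₂` evaluated on a real tangent vector `X ∈ ℂ² ≅ ℝ⁴`. -/
def AForm (p : ℂ × ℂ) (X : ℂ × ℂ) : ℂ := X.1 - 2 * starRingEnd ℂ p.2 * X.2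

/-- The explicit Ricci-flat metric
`g = (v − 2z₂z̄₂)^{−1/2}(dz₁ − 2z̄₂dz₂)(dz̄₁ − 2z₂dz̄₂) + 4(v − 2z₂z̄₂)^{1/2} dz₂ dz̄₂`
(with `2αβ = α⊗β + β⊗α`) on real tangent vectors. -/
def gExpl (p : ℂ × ℂ) (X Y : ℂ × ℂ) : ℝ :=
  1 / Real.sqrt (wDef p) * (AForm p X * starRingEnd ℂ (AForm p Y)).re +
    4 * Real.sqrt (wDef p) * (X.2 * starRingEnd ℂ Y.2).re

/-- The almost complex structure
`J⁺_{e^{iφ}} = 2Re{ i e^{iφ} [ (2(v − 2z₂z̄₂)^{1/2})^{−1}(dz₁ − 2z̄₂dz₂) ⊗ (∂_{z̄₂} + 2z₂∂_{z̄₁}) − 2(v − 2z₂z̄₂)^{1/2} dz₂ ⊗ ∂_{z̄₁} ] }`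
as a real endomorphism of the tangent space `ℂ² ≅ ℝ⁴`: a real tangent vector `X`
corresponds to `X.1 ∂_{z₁} + conj X.1 ∂_{z̄₁} + X.2 ∂_{z₂} + conj X.2 ∂_{z̄₂}` in the
complexified tangent space; the components below are the `∂_{z₁}`- and
`∂_{z₂}`-coefficients of `(T + T̄)(X)`. -/
def JExpl (φ : ℝ) (p : ℂ × ℂ) (X : ℂ × ℂ) : ℂ × ℂ :=
  (starRingEnd ℂ (Complex.I * Complex.exp ((φ : ℂ) * Complex.I) *
      (AForm p X / (2 * (Real.sqrt (wDef p) : ℂ)) * (2 * p.2) -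
        2 * (Real.sqrt (wDef p) : ℂ) * X.2)),
   starRingEnd ℂ (Complex.I * Complex.exp ((φ : ℂ) * Complex.I) *
      (AForm p X / (2 * (Real.sqrt (wDef p) : ℂ)))))

/-- The Lie bracket `[X,Y]` of two vector fields on (an open subset of) `ℂ² ≅ ℝ⁴`. -/
def lieBr (X Y : ℂ × ℂ → ℂ × ℂ) (p : ℂ × ℂ) : ℂ × ℂ :=
  fderiv ℝ Y p (X p) - fderiv ℝ X p (Y p)

/-- The vector field `J⁺_{e^{iφ}} X`. -/
def JExplField (φ : ℝ) (X : ℂ × ℂ → ℂ × ℂ) : ℂ × ℂ → ℂ × ℂ := fun p => JExpl φ p (X p)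

/-- The Nijenhuis tensor `N_J(X,Y) = [JX, JY] − [X,Y] − J[JX, Y] − J[X, JY]`
of `J = J⁺_{e^{iφ}}`, on vector fields `X, Y`. -/
def nijExpl (φ : ℝ) (X Y : ℂ × ℂ → ℂ × ℂ) (p : ℂ × ℂ) : ℂ × ℂ :=
  lieBr (JExplField φ X) (JExplField φ Y) p - lieBr X Y p -
    JExpl φ p (lieBr (JExplField φ X) Y p) - JExpl φ p (lieBr X (JExplField φ Y) p)

/-!
Take the constant fields `X = (1, 0)` and `Y = (0, e^{-iφ})` at `p₀ = (1/2, 0)`, where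
`v − 2|z₂|² = 1`. For constant fields all brackets reduce to first derivatives of `J` at `p₀`,
which at `z₂ = 0` are read off from the formula for `J` (only `√w` and `z₂` vary to first order).
The factor `e^{-iφ}` in `Y` makes the phase of `J` cancel, and `N_J(X, Y)(p₀) = (0, 2e^{-iφ}) ≠ 0`.
-/

open Complex ContinuousLinearMap

lemma JExpl_neg (φ : ℝ) (p v : ℂ × ℂ) : JExpl φ p (-v) = -JExpl φ p v := by
  ext1 <;> simp [JExpl, AForm] <;> ring

lemma nijExpl_const (φ : ℝ) (a b p : ℂ × ℂ) :
    nijExpl φ (fun _ => a) (fun _ => b) p =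
      fderiv ℝ (fun q => JExpl φ q b) p (JExpl φ p a) -
        fderiv ℝ (fun q => JExpl φ q a) p (JExpl φ p b) +
        JExpl φ p (fderiv ℝ (fun q => JExpl φ q a) p b) -
        JExpl φ p (fderiv ℝ (fun q => JExpl φ q b) p a) := by
  simp [nijExpl, lieBr, JExplField, JExpl_neg]
  abel

lemma conj_exp_ofReal_mul_I (φ : ℝ) : starRingEnd ℂ (exp (φ * I)) = exp (-(φ * I)) := by
  rw [← exp_conj]; simp

def basePoint : ℂ × ℂ := (1 / 2, 0)

lemma wDef_basePoint : wDef basePoint = 1 := by norm_num [wDef, basePoint]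

lemma basePoint_mem_Uprime : basePoint ∈ Uprime := by
  simp [Uprime, wDef_basePoint]

lemma hasFDerivAt_wDef_basePoint :
    HasFDerivAt wDef ((2 : ℝ) • (reCLM ∘L fst ℝ ℂ ℂ)) basePoint := by
  have hnorm : HasFDerivAt (fun q : ℂ × ℂ => ‖q.2‖ ^ 2) (0 : ℂ × ℂ →L[ℝ] ℝ) basePoint := by
    refine ((hasStrictFDerivAt_norm_sq (0 : ℂ)).hasFDerivAt.comp basePoint
      (hasFDerivAt_snd (𝕜 := ℝ))).congr_fderiv ?_
    simp
  have hw : wDef = fun q => 2 * (reCLM ∘L fst ℝ ℂ ℂ) q - 2 * ‖q.2‖ ^ 2 := by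
    ext q; simp [wDef, normSq_eq_norm_sq]
  rw [hw]
  exact (((reCLM ∘L fst ℝ ℂ ℂ).hasFDerivAt.const_mul 2).sub (hnorm.const_mul 2)).congr_fderiv
    (by simp)

lemma hasFDerivAt_sqrt_wDef_basePoint :
    HasFDerivAt (fun q => ((√(wDef q) : ℝ) : ℂ)) (ofRealCLM ∘L reCLM ∘L fst ℝ ℂ ℂ) basePoint := by
  refine (ofRealCLM.hasFDerivAt.comp basePoint
    (hasFDerivAt_wDef_basePoint.sqrt (by simp [wDef_basePoint]))).congr_fderiv ?_
  ext h <;> simp [wDef_basePoint]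

lemma fderiv_JExpl_basePoint (φ : ℝ) (c h : ℂ × ℂ) :
    fderiv ℝ (fun q => JExpl φ q c) basePoint h =
      (starRingEnd ℂ (I * exp (φ * I) * (c.1 * h.2 - 2 * h.1.re * c.2)),
       starRingEnd ℂ (I * exp (φ * I) * (-(starRingEnd ℂ h.2 * c.2) - c.1 * h.1.re / 2))) := by
  set e := I * exp (φ * I)
  set s := fun q => ((√(wDef q) : ℝ) : ℂ)
  have hs0 : s basePoint = 1 := by simp [s, wDef_basePoint]
  have hz0 : basePoint.2 = 0 := rfl
  have hs := hasFDerivAt_sqrt_wDef_basePoint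
  have hz : HasFDerivAt (fun q : ℂ × ℂ => q.2) (snd ℝ ℂ ℂ) basePoint := hasFDerivAt_snd
  have hA : HasFDerivAt (fun q => AForm q c) _ basePoint :=
    (hasFDerivAt_const c.1 basePoint).sub ((hz.star.const_mul 2).mul_const c.2)
  have hinv : HasFDerivAt (fun q => (2 * s q)⁻¹) _ basePoint :=
    (hasFDerivAt_inv' (𝕜 := ℝ) (by simp [hs0] : 2 * s basePoint ≠ 0)).comp basePoint
      (hs.const_mul 2)
  have hQ := hA.mul hinv
  have hJ₁ := (((hQ.mul (hz.const_mul 2)).sub ((hs.const_mul 2).mul_const c.2)).const_mul e).star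
  have hJ₂ := (hQ.const_mul e).star
  -- definitional unfolding of `JExpl`, with `starRingEnd ℂ z = star z` and `a / b = a * b⁻¹`
  have hJ : HasFDerivAt (fun q => JExpl φ q c) _ basePoint := hJ₁.prodMk hJ₂
  rw [hJ.fderiv]
  ext1 <;> simp [hs0, hz0, AForm, map_ofNat, -mul_eq_mul_left_iff] <;> ring

lemma JExpl_basePoint (φ : ℝ) (v : ℂ × ℂ) :
    JExpl φ basePoint v = (2 * I * exp (-(φ * I)) * starRingEnd ℂ v.2,
      -I * exp (-(φ * I)) * starRingEnd ℂ v.1 / 2) := by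
  have hz0 : basePoint.2 = 0 := rfl
  ext1 <;> simp [JExpl, AForm, hz0, wDef_basePoint, conj_exp_ofReal_mul_I, map_ofNat] <;> ring

lemma nijExpl_basePoint (φ : ℝ) :
    nijExpl φ (fun _ => (1, 0)) (fun _ => (0, exp (-(φ * I)))) basePoint =
      (0, 2 * exp (-(φ * I))) := by
  have hu : exp (φ * I) * exp (-(φ * I)) = 1 := by rw [← exp_add]; simp
  have hconj : starRingEnd ℂ (exp (-(φ * I))) = exp (φ * I) := by
    rw [← conj_exp_ofReal_mul_I, conj_conj]
  have hJX : JExpl φ basePoint (1, 0) = (0, -I * exp (-(φ * I)) / 2) := by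
    simp [JExpl_basePoint]
  have hJY : JExpl φ basePoint (0, exp (-(φ * I))) = (2 * I, 0) := by
    simp [JExpl_basePoint, hconj]; linear_combination 2 * I * hu
  rw [nijExpl_const, hJX, hJY]
  simp [JExpl_basePoint, fderiv_JExpl_basePoint, conj_exp_ofReal_mul_I, hconj, map_ofNat]
  linear_combination 2 * exp (-(φ * I)) * hu - 2 * exp (-(φ * I)) ^ 2 * exp (φ * I) * I_sq

/-- For every `φ`, the almost complex structure `J⁺_{e^{iφ}}` of the
explicit example is not integrable: its Nijenhuis tensor does not vanish identically
on `U'`. Hence the almost-Kähler structure `(U', g, J⁺_{e^{iφ}})` is non-Kähler. -/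
theorem JExpl_not_integrable (φ : ℝ) :
    ∃ X Y : ℂ × ℂ → ℂ × ℂ, ContDiff ℝ (⊤ : ℕ∞) X ∧ ContDiff ℝ (⊤ : ℕ∞) Y ∧
      ∃ p ∈ Uprime, nijExpl φ X Y p ≠ 0 := by
  refine ⟨fun _ => (1, 0), fun _ => (0, exp (-(φ * I))), contDiff_const, contDiff_const,
    basePoint, basePoint_mem_Uprime, ?_⟩
  rw [nijExpl_basePoint]
  simp [exp_ne_zero]
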